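/- arXiv:1210.1136 — 3 statements merged into one kernel-verified Lean document; each statement's English description precedes it below -/
import Mathlib

section
/- Counting via stopping times: in a K-armed stochastic bandit with any strategy, for every arm a, every horizon T > K, and every sequence (B_n)_{n≥1} of Borel subsets B_n ⊆ ℝⁿ, one has Σ_{t=K}^{T−1} P{ (X_{a,1}, …, X_{a,N_a(t)}) ∈ B_{N_a(t)} and A_{t+1} = a } ≤ Σ_{n=1}^{T−K} P{ (X_{a,1}, …, X_{a,n}) ∈ B_n }. -/
/-
The bound holds pathwise. After the `K` initialisation rounds every arm has been pulled once, so
`N_a(t) ∈ {1, …, T - K}` for `K ≤ t < T`; and `N_a` increases strictly after every round `t` with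
`A_{t+1} = a`, so for fixed `ω` the map `t ↦ N_a(t)` is injective on those rounds. Hence each
event `{(X_{a,1}, …, X_{a,n}) ∈ B_n}` is counted at most once on the left-hand side.
-/

open MeasureTheory ProbabilityTheory Real ENNReal
open scoped Classical

section Bandit

variable {Ω : Type*} [MeasurableSpace Ω]

/-- `pulls A a t ω` is `N_a(t)`, the number of rounds `s ∈ {1, …, t}` at which arm `a`
was chosen. -/
def pulls {K : ℕ} (A : ℕ → Ω → Fin K) (a : Fin K) (t : ℕ) (ω : Ω) : ℕ :=
  ((Finset.Icc 1 t).filter fun s => A s ω = a).card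

/-- `reward X A s ω` is `Y_s = X_{A_s, N_{A_s}(s)}`, the payoff received at round `s`
(the draws `(X_{a,n})_{n ≥ 1}` of arm `a` are indexed here by `n - 1 ∈ ℕ`). -/
def reward {K : ℕ} (X : Fin K → ℕ → Ω → ℝ) (A : ℕ → Ω → Fin K) (s : ℕ) (ω : Ω) : ℝ :=
  X (A s ω) (pulls A (A s ω) s ω - 1) ω

/-- The σ-algebra generated by `A_1, Y_1, …, A_t, Y_t`. -/
def hist {K : ℕ} (X : Fin K → ℕ → Ω → ℝ) (A : ℕ → Ω → Fin K) (t : ℕ) :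
    MeasurableSpace Ω :=
  MeasurableSpace.comap
    (fun ω => fun s : Fin t => (A (s + 1) ω, reward X A (s + 1) ω)) inferInstance

end Bandit

open Finset in
theorem MeasureTheory.sum_measure_le_sum_of_injOn {Ω ι κ : Type*} [MeasurableSpace Ω]
    [MeasurableSpace κ] [MeasurableSingletonClass κ] (μ : Measure Ω) {I : Finset ι}
    {S : Finset κ} {N : ι → Ω → κ} {G : ι → Set Ω} {F : κ → Set Ω}
    (hF : ∀ n, MeasurableSet (F n)) (hN : ∀ t ∈ I, Measurable (N t))
    (hG : ∀ t ∈ I, MeasurableSet (G t)) (hinj : ∀ ω, Set.InjOn (N · ω) {t | ω ∈ G t})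
    (hS : ∀ t ∈ I, ∀ ω ∈ G t, N t ω ∈ S) :
    ∑ t ∈ I, μ {ω | ω ∈ F (N t ω) ∧ ω ∈ G t} ≤ ∑ n ∈ S, μ (F n) := by
  calc ∑ t ∈ I, μ {ω | ω ∈ F (N t ω) ∧ ω ∈ G t}
      ≤ ∑ t ∈ I, ∑ n ∈ S, μ (F n ∩ {ω | N t ω = n ∧ ω ∈ G t}) := by
        gcongr with t ht
        refine (measure_mono ?_).trans (measure_biUnion_finset_le S _)
        rintro ω ⟨hωF, hωG⟩
        exact Set.mem_iUnion₂.2 ⟨N t ω, hS t ht ω hωG, hωF, rfl, hωG⟩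
    _ = ∑ n ∈ S, μ (⋃ t ∈ I, F n ∩ {ω | N t ω = n ∧ ω ∈ G t}) := by
        rw [sum_comm]
        refine sum_congr rfl fun n _ => (measure_biUnion_finset ?_ ?_).symm
        · intro t _ t' _ hne
          refine Set.disjoint_left.2 fun ω ⟨_, hn, hωG⟩ ⟨_, hn', hωG'⟩ => hne ?_
          exact hinj ω hωG hωG' (hn.trans hn'.symm)
        · exact fun t ht => (hF n).inter
            (((hN t ht) (measurableSet_singleton n)).inter (hG t ht))
    _ ≤ ∑ n ∈ S, μ (F n) := by
        gcongr
        exact Set.iUnion₂_subset fun _ _ => Set.inter_subset_left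

theorem Measurable.apply_of_countable {Ω ι β : Type*} [MeasurableSpace Ω] [MeasurableSpace ι]
    [Countable ι] [MeasurableSingletonClass ι] [MeasurableSpace β] {f : ι → Ω → β}
    (hf : ∀ i, Measurable (f i)) {c : Ω → ι} (hc : Measurable c) :
    Measurable fun ω => f (c ω) ω :=
  (measurable_from_prod_countable_left (f := fun p : Ω × ι => f p.2 p.1) hf).comp
    (measurable_id.prodMk hc)

section Bandit

variable {Ω : Type*} {K : ℕ} {A : ℕ → Ω → Fin K}

theorem pulls_succ (a : Fin K) (t : ℕ) (ω : Ω) :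
    pulls A a (t + 1) ω = pulls A a t ω + if A (t + 1) ω = a then 1 else 0 := by
  rw [pulls, pulls, ← Finset.insert_Icc_right_eq_Icc_add_one (by omega), Finset.filter_insert]
  split_ifs
  · exact Finset.card_insert_of_notMem (by simp)
  · rfl

theorem pulls_mono {a : Fin K} {ω : Ω} {t t' : ℕ} (h : t ≤ t') :
    pulls A a t ω ≤ pulls A a t' ω :=
  Finset.card_le_card (Finset.filter_subset_filter _ (Finset.Icc_subset_Icc le_rfl h))

theorem pulls_add_le (a : Fin K) (t d : ℕ) (ω : Ω) : pulls A a (t + d) ω ≤ pulls A a t ω + d := by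
  induction d with
  | zero => rfl
  | succ d ih =>
    rw [← add_assoc, pulls_succ]
    split_ifs <;> omega

theorem pulls_lt_of_lt {a : Fin K} {t t' : ℕ} {ω : Ω} (ha : A (t + 1) ω = a) (h : t < t') :
    pulls A a t ω < pulls A a t' ω := by
  have : pulls A a (t + 1) ω ≤ pulls A a t' ω := pulls_mono h
  simp only [pulls_succ, if_pos ha] at this
  omega

theorem injOn_pulls (a : Fin K) (ω : Ω) :
    Set.InjOn (fun t => pulls A a t ω) {t | A (t + 1) ω = a} := by
  intro t ht t' ht' heq
  by_contra hne
  rcases Nat.lt_or_gt_of_ne hne with h | h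
  · exact (pulls_lt_of_lt ht h).ne heq
  · exact (pulls_lt_of_lt ht' h).ne' heq

theorem pulls_init_eq_one (hinit : ∀ s ω, 1 ≤ s → s ≤ K → (A s ω : ℕ) = s - 1)
    (a : Fin K) (ω : Ω) : pulls A a K ω = 1 := by
  rw [pulls, Finset.card_eq_one]
  refine ⟨(a : ℕ) + 1, Finset.ext fun s => ?_⟩
  simp only [Finset.mem_filter, Finset.mem_Icc, Finset.mem_singleton]
  constructor
  · rintro ⟨⟨h1, h2⟩, rfl⟩
    have := hinit s ω h1 h2
    omega
  · rintro rfl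
    have hs := hinit ((a : ℕ) + 1) ω (by omega) a.isLt
    exact ⟨⟨by omega, a.isLt⟩, Fin.ext (by omega)⟩

theorem pulls_mem_Icc (hinit : ∀ s ω, 1 ≤ s → s ≤ K → (A s ω : ℕ) = s - 1)
    (a : Fin K) {t : ℕ} (ht : K ≤ t) (ω : Ω) :
    pulls A a t ω ∈ Finset.Icc 1 (t + 1 - K) := by
  obtain ⟨d, rfl⟩ := Nat.exists_eq_add_of_le ht
  have hpos : pulls A a K ω ≤ pulls A a (K + d) ω := pulls_mono ht
  have hle := pulls_add_le (A := A) a K d ω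
  rw [pulls_init_eq_one hinit] at hpos hle
  simp only [Finset.mem_Icc]
  omega

variable [MeasurableSpace Ω]

theorem measurable_pulls (a : Fin K) {t : ℕ} (hA : ∀ s ∈ Finset.Icc 1 t, Measurable (A s)) :
    Measurable (pulls A a t) := by
  have hsum : pulls A a t = fun ω => ∑ s ∈ Finset.Icc 1 t, if A s ω = a then 1 else 0 :=
    funext fun ω => Finset.card_filter _ _
  rw [hsum]
  exact Finset.measurable_sum _ fun s hs =>
    Measurable.ite (hA s hs (measurableSet_singleton a)) measurable_const measurable_const

theorem measurable_reward {X : Fin K → ℕ → Ω → ℝ} (hX : ∀ a n, Measurable (X a n)) {s : ℕ}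
    (hs : 1 ≤ s) (hA : ∀ u ∈ Finset.Icc 1 s, Measurable (A u)) :
    Measurable (reward X A s) := by
  have hAs : Measurable (A s) := hA s (Finset.mem_Icc.2 ⟨hs, le_rfl⟩)
  have hN : Measurable fun ω => pulls A (A s ω) s ω :=
    Measurable.apply_of_countable (fun b => measurable_pulls b hA) hAs
  exact Measurable.apply_of_countable (fun p : Fin K × ℕ => hX p.1 (p.2 - 1)) (hAs.prodMk hN)

theorem measurable_arm {X : Fin K → ℕ → Ω → ℝ} (hX : ∀ a n, Measurable (X a n))
    (hinit : ∀ s ω, 1 ≤ s → s ≤ K → (A s ω : ℕ) = s - 1)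
    (hadapt : ∀ t, K ≤ t → Measurable[hist X A t] (A (t + 1))) (s : ℕ) (hs : 1 ≤ s) :
    Measurable (A s) := by
  induction s using Nat.strong_induction_on with
  | _ s ih =>
    rcases le_or_gt s K with hsK | hsK
    · have hconst : A s = fun _ => ⟨s - 1, by omega⟩ :=
        funext fun ω => Fin.ext (hinit s ω hs hsK)
      rw [hconst]
      exact measurable_const
    · obtain ⟨t, rfl⟩ : ∃ t, s = t + 1 := ⟨s - 1, by omega⟩
      have hA : ∀ u ∈ Finset.Icc 1 t, Measurable (A u) := fun u hu =>
        ih u (by simp at hu; omega) (Finset.mem_Icc.1 hu).1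
      have hhist : Measurable fun ω (i : Fin t) => (A (i + 1) ω, reward X A (i + 1) ω) :=
        measurable_pi_lambda _ fun i =>
          (hA _ (by simp)).prodMk (measurable_reward hX (by omega)
            fun u hu => hA u (Finset.Icc_subset_Icc le_rfl (by omega) hu))
      exact (hadapt t (by omega)).mono hhist.comap_le le_rfl

end Bandit

theorem counting_via_stopping_times_general
    {Ω : Type*} [MeasurableSpace Ω] (P : Measure Ω) (K : ℕ)
    (X : Fin K → ℕ → Ω → ℝ) (hmeas : ∀ a n, Measurable (X a n))
    (A : ℕ → Ω → Fin K)
    (hinit : ∀ s ω, 1 ≤ s → s ≤ K → (A s ω : ℕ) = s - 1)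
    (hadapt : ∀ t, K ≤ t → Measurable[hist X A t] (A (t + 1)))
    (a : Fin K) (B : (n : ℕ) → Set (Fin n → ℝ)) (hB : ∀ n, MeasurableSet (B n))
    (T : ℕ) :
    ∑ t ∈ Finset.Ico K T,
        P {ω | (fun i : Fin (pulls A a t ω) => X a (↑i) ω) ∈ B (pulls A a t ω)
            ∧ A (t + 1) ω = a}
      ≤ ∑ n ∈ Finset.Icc 1 (T - K), P {ω | (fun i : Fin n => X a (↑i) ω) ∈ B n} := by
  have hA : ∀ s, 1 ≤ s → Measurable (A s) := measurable_arm hmeas hinit hadapt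
  refine sum_measure_le_sum_of_injOn P
    (F := fun n => {ω | (fun i : Fin n => X a i ω) ∈ B n}) (G := fun t => {ω | A (t + 1) ω = a})
    (fun n => measurable_pi_lambda (fun ω (i : Fin n) => X a i ω) (fun i => hmeas a i) (hB n))
    (fun t _ => measurable_pulls a fun s hs => hA s (Finset.mem_Icc.1 hs).1)
    (fun t _ => hA (t + 1) le_add_self (measurableSet_singleton a))
    (injOn_pulls a) fun t ht ω _ => ?_
  obtain ⟨hKt, htT⟩ := Finset.mem_Ico.1 ht
  exact Finset.Icc_subset_Icc le_rfl (by omega) (pulls_mem_Icc hinit a hKt ω)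

/-- Counting via stopping times: in a `K`-armed stochastic bandit with any strategy, for
every arm `a`, every horizon `T > K` and every sequence `(B_n)` of Borel sets `B_n ⊆ ℝⁿ`,
`∑_{t=K}^{T−1} P{(X_{a,1}, …, X_{a,N_a(t)}) ∈ B_{N_a(t)} and A_{t+1} = a}`
`≤ ∑_{n=1}^{T−K} P{(X_{a,1}, …, X_{a,n}) ∈ B_n}`. -/
theorem counting_via_stopping_times
    {Ω : Type*} [MeasurableSpace Ω] (P : Measure Ω) [IsProbabilityMeasure P]
    (K : ℕ) (hK : 2 ≤ K) (ν : Fin K → Measure ℝ) (hproba : ∀ a, IsProbabilityMeasure (ν a))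
    (X : Fin K → ℕ → Ω → ℝ) (hmeas : ∀ a n, Measurable (X a n))
    (hlaw : ∀ a n, Measure.map (X a n) P = ν a)
    (hindep : iIndepFun (fun p : Fin K × ℕ => X p.1 p.2) P)
    (A : ℕ → Ω → Fin K)
    (hinit : ∀ s ω, 1 ≤ s → s ≤ K → (A s ω : ℕ) = s - 1)
    (hadapt : ∀ t, K ≤ t → Measurable[hist X A t] (A (t + 1)))
    (a : Fin K) (B : (n : ℕ) → Set (Fin n → ℝ)) (hB : ∀ n, MeasurableSet (B n))
    (T : ℕ) (hT : K < T) :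
    ∑ t ∈ Finset.Ico K T,
        P {ω | (fun i : Fin (pulls A a t ω) => X a (↑i) ω) ∈ B (pulls A a t ω)
            ∧ A (t + 1) ω = a}
      ≤ ∑ n ∈ Finset.Icc 1 (T - K), P {ω | (fun i : Fin n => X a (↑i) ω) ∈ B n} :=
  counting_via_stopping_times_general P K X hmeas A hinit hadapt a B hB T
end

section
/- For any two probability measures ν and ν' on [0,1], the binary Kullback–Leibler divergence between their means is bounded by their Kullback–Leibler divergence: d_ber( E(ν), E(ν') ) ≤ KL(ν, ν'). -/
open MeasureTheory Real ENNReal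
open scoped Classical

/-- Kullback–Leibler divergence between two measures, with value `∞` when the first
measure is not absolutely continuous with respect to the second (or when the
log-likelihood ratio is not integrable). -/
noncomputable def KLdiv {α : Type*} [MeasurableSpace α] (μ ν : Measure α) : ℝ≥0∞ :=
  if μ ≪ ν ∧ Integrable (llr μ ν) μ then ENNReal.ofReal (∫ x, llr μ ν x ∂μ) else ⊤

/-- The binary Kullback–Leibler divergence `d_ber(p, q)` for `p, q ∈ [0,1]`, with the
conventions `0 log 0 = 0` and `d_ber(p, q) = +∞` whenever `q ∈ {0,1}` and `p ≠ q`. -/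
noncomputable def dBer (p q : ℝ) : ℝ≥0∞ :=
  if q = 0 ∨ q = 1 then (if p = q then 0 else ⊤)
  else ENNReal.ofReal (p * Real.log (p / q) + (1 - p) * Real.log ((1 - p) / (1 - q)))

/-!
Push both measures forward through the Markov kernel sending `t ∈ [0,1]` to the Bernoulli
law of parameter `t`. Since the kernel is affine in `t`, the images are the Bernoulli laws
whose parameters are the means, and their Kullback–Leibler divergence is `d_ber` of the means.
The data processing inequality then bounds it by the divergence of the original measures.
-/

open ProbabilityTheory InformationTheory unitInterval Measure

lemma KLdiv_eq_klDiv {α : Type*} [MeasurableSpace α] (μ ν : Measure α)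
    [IsProbabilityMeasure μ] [IsProbabilityMeasure ν] : KLdiv μ ν = klDiv μ ν := by
  by_cases h : μ ≪ ν ∧ Integrable (llr μ ν) μ
  · rw [KLdiv, if_pos h, klDiv_of_ac_of_integrable h.1 h.2]
    simp
  · rw [KLdiv, if_neg h, eq_comm, klDiv_eq_top_iff]
    tauto

lemma MeasureTheory.Measure.toReal_rnDeriv_apply_singleton {α : Type*} [MeasurableSpace α]
    [MeasurableSingletonClass α] {μ ν : Measure α} [μ.HaveLebesgueDecomposition ν]
    [IsFiniteMeasure ν] (hμν : μ ≪ ν) {a : α} (ha : ν {a} ≠ 0) :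
    (μ.rnDeriv ν a).toReal = μ.real {a} / ν.real {a} := by
  have h : ν {a} * μ.rnDeriv ν a = μ {a} := by
    rw [mul_comm, ← lintegral_singleton, Measure.setLIntegral_rnDeriv hμν]
  rw [(ENNReal.eq_div_iff ha (measure_ne_top ν _)).mpr h, ENNReal.toReal_div]
  rfl

lemma unitInterval.toNNReal_eq_zero {p : I} : unitInterval.toNNReal p = 0 ↔ p = 0 := by
  rw [← NNReal.coe_inj]
  exact Set.Icc.coe_eq_zero

lemma unitInterval.coe_toNNReal_eq_ofReal (p : I) :
    (unitInterval.toNNReal p : ℝ≥0∞) = ENNReal.ofReal p := by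
  rw [ENNReal.ofReal, Real.toNNReal_of_nonneg p.2.1]
  rfl

section Bernoulli

variable {X : Type*} [MeasurableSpace X] {x y : X}

lemma measurable_bernoulliMeasure (x y : X) : Measurable (fun p : I ↦ Ber(x, y, p)) := by
  refine Measure.measurable_of_measurable_coe _ fun s _ ↦ ?_
  simp only [bernoulliMeasure_def, Measure.add_apply, Measure.smul_apply, ENNReal.smul_def,
    smul_eq_mul]
  fun_prop

lemma bernoulliMeasure_apply_eq_ofReal (p : I) (s : Set X) :
    Ber(x, y, p) s = ENNReal.ofReal p * dirac x s + ENNReal.ofReal (1 - p) * dirac y s := by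
  rw [bernoulliMeasure_def, ← coe_symm_eq]
  simp only [Measure.add_apply, Measure.smul_apply, ENNReal.smul_def, smul_eq_mul,
    unitInterval.coe_toNNReal_eq_ofReal]

lemma bernoulliMeasure_absolutelyContinuous (p : I) {q : I} (hq0 : q ≠ 0) (hq1 : q ≠ 1) :
    Ber(x, y, p) ≪ Ber(x, y, q) := by
  refine Measure.AbsolutelyContinuous.mk fun s hs hqs ↦ ?_
  rw [bernoulliMeasure_apply q hs] at hqs
  rw [bernoulliMeasure_apply p hs]
  split_ifs at hqs ⊢ <;>
    simp_all [unitInterval.toNNReal_eq_zero, symm_eq_zero]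

lemma klDiv_bernoulliMeasure [MeasurableSingletonClass X] (hxy : x ≠ y) (p q : I) :
    klDiv Ber(x, y, p) Ber(x, y, q) = dBer p q := by
  by_cases hq : (q : ℝ) = 0 ∨ (q : ℝ) = 1
  · rw [dBer, if_pos hq]
    split_ifs with hpq
    · rw [Subtype.ext hpq, klDiv_self]
    refine klDiv_of_not_ac fun hac ↦ hpq ?_
    simp only [Set.Icc.coe_eq_zero, Set.Icc.coe_eq_one] at hq
    rcases hq with rfl | rfl
    · have h := hac (s := {x}) (by simp [hxy])
      rw [bernoulliMeasure_apply_of_mem_of_notMem p (measurableSet_singleton x) rfl hxy.symm,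
        ENNReal.coe_eq_zero, unitInterval.toNNReal_eq_zero] at h
      rw [h]
    · have h := hac (s := {y}) (by simp [hxy.symm])
      rw [bernoulliMeasure_apply_of_notMem_of_mem p (measurableSet_singleton y) hxy rfl,
        ENNReal.coe_eq_zero, unitInterval.toNNReal_eq_zero, symm_eq_zero] at h
      rw [h]
  rw [not_or, Set.Icc.coe_eq_zero, Set.Icc.coe_eq_one] at hq
  have hac := bernoulliMeasure_absolutelyContinuous (x := x) (y := y) p hq.1 hq.2
  rw [dBer, if_neg (by simpa [not_or] using hq),
    klDiv_of_ac_of_integrable hac (integrable_bernoulliMeasure _ _ _ _),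
    integral_bernoulliMeasure]
  simp only [llr, smul_eq_mul, probReal_univ, add_sub_cancel_right]
  rw [Measure.toReal_rnDeriv_apply_singleton hac, Measure.toReal_rnDeriv_apply_singleton hac]
  all_goals simp [hxy, hxy.symm, unitInterval.toNNReal_eq_zero, symm_eq_zero, hq]

noncomputable def bernoulliKernel (x y : X) : Kernel ℝ X where
  toFun t := Ber(x, y, Set.projIcc 0 1 zero_le_one t)
  measurable' := (measurable_bernoulliMeasure x y).comp continuous_projIcc.measurable

lemma bernoulliKernel_apply (x y : X) (t : ℝ) :
    bernoulliKernel x y t = Ber(x, y, Set.projIcc 0 1 zero_le_one t) := rfl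

instance : IsMarkovKernel (bernoulliKernel x y) :=
  ⟨fun t ↦ by rw [bernoulliKernel_apply]; infer_instance⟩

lemma integrable_id_of_ae_mem_unitInterval {ν : Measure ℝ} [IsFiniteMeasure ν]
    (hν : ∀ᵐ t ∂ν, t ∈ I) : Integrable (fun t ↦ t) ν :=
  Integrable.of_bound measurable_id.aestronglyMeasurable 1
    (hν.mono fun t ht ↦ abs_le.mpr ⟨by linarith [ht.1], ht.2⟩ : ∀ᵐ t ∂ν, |t| ≤ 1)

lemma integral_id_mem_unitInterval {ν : Measure ℝ} [IsProbabilityMeasure ν]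
    (hν : ∀ᵐ t ∂ν, t ∈ I) : ∫ t, t ∂ν ∈ I :=
  (convex_Icc 0 1).integral_mem isClosed_Icc hν (integrable_id_of_ae_mem_unitInterval hν)

lemma bernoulliKernel_comp (x y : X) {ν : Measure ℝ} [IsProbabilityMeasure ν]
    (hν : ∀ᵐ t ∂ν, t ∈ I) :
    bernoulliKernel x y ∘ₘ ν = Ber(x, y, ⟨∫ t, t ∂ν, integral_id_mem_unitInterval hν⟩) := by
  have hint : Integrable (fun t ↦ t) ν := integrable_id_of_ae_mem_unitInterval hν
  ext s hs
  rw [Measure.bind_apply hs (Kernel.aemeasurable _), bernoulliMeasure_apply_eq_ofReal]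
  calc ∫⁻ t, bernoulliKernel x y t s ∂ν
      = ∫⁻ t, ENNReal.ofReal t * dirac x s + ENNReal.ofReal (1 - t) * dirac y s ∂ν := by
        refine lintegral_congr_ae (hν.mono fun t ht ↦ ?_)
        dsimp only
        rw [bernoulliKernel_apply, Set.projIcc_of_mem _ ht, bernoulliMeasure_apply_eq_ofReal]
    _ = ENNReal.ofReal (∫ t, t ∂ν) * dirac x s + ENNReal.ofReal (1 - ∫ t, t ∂ν) * dirac y s := by
        rw [lintegral_add_left (by fun_prop), lintegral_mul_const _ (by fun_prop),
          lintegral_mul_const _ (by fun_prop),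
          ← ofReal_integral_eq_lintegral_ofReal hint (hν.mono fun _ h ↦ h.1),
          ← ofReal_integral_eq_lintegral_ofReal (f := fun t ↦ 1 - t)
            ((integrable_const 1).sub hint) (hν.mono fun _ h ↦ sub_nonneg.mpr h.2),
          integral_sub (integrable_const 1) hint, integral_const, probReal_univ, one_smul]

end Bernoulli

/-- For any two probability measures `ν`, `ν'` on `[0,1]`, the binary Kullback–Leibler
divergence between their means is bounded by their Kullback–Leibler divergence:
`d_ber(E(ν), E(ν')) ≤ KL(ν, ν')`. -/
theorem dBer_means_le_KL (ν ν' : Measure ℝ) [IsProbabilityMeasure ν] [IsProbabilityMeasure ν']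
    (hsupp : ν (Set.Icc (0 : ℝ) 1)ᶜ = 0) (hsupp' : ν' (Set.Icc (0 : ℝ) 1)ᶜ = 0) :
    dBer (∫ x, x ∂ν) (∫ x, x ∂ν') ≤ KLdiv ν ν' := by
  have hI : ∀ᵐ t ∂ν, t ∈ I := ae_iff.mpr hsupp
  have hI' : ∀ᵐ t ∂ν', t ∈ I := ae_iff.mpr hsupp'
  calc dBer (∫ x, x ∂ν) (∫ x, x ∂ν')
      = klDiv (bernoulliKernel true false ∘ₘ ν) (bernoulliKernel true false ∘ₘ ν') := by
        rw [bernoulliKernel_comp true false hI, bernoulliKernel_comp true false hI',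
          klDiv_bernoulliMeasure (by decide : true ≠ false)]
    _ ≤ klDiv ν ν' := klDiv_comp_right_le ν ν' _
    _ = KLdiv ν ν' := (KLdiv_eq_klDiv ν ν').symm
end

section
/- In a canonical exponential family model, the optimal information quantity coincides with the re-parameterized divergence: for every θ ∈ Θ and every μ ∈ I with b'(θ) < μ, inf{ KL(ν_θ, ν_{θ'}) : θ' ∈ Θ, b'(θ') > μ } = d( b'(θ), μ ). -/
open MeasureTheory Real ENNReal
open scoped Classical

/-- The natural parameter set `Θ = {θ : ∫ e^{θx} dρ(x) < ∞}` of the exponential family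
with dominating measure `ρ`. -/
def natParam (ρ : Measure ℝ) : Set ℝ := {θ | Integrable (fun x => Real.exp (θ * x)) ρ}

/-- The log-partition function `b(θ) = log ∫ e^{θx} dρ(x)`. -/
noncomputable def logPartition (ρ : Measure ℝ) (θ : ℝ) : ℝ :=
  Real.log (∫ x, Real.exp (θ * x) ∂ρ)

/-- The member `ν_θ` of the canonical exponential family dominated by `ρ`, with density
`x ↦ exp(θx − b(θ))` with respect to `ρ`. -/
noncomputable def expFam (ρ : Measure ℝ) (θ : ℝ) : Measure ℝ :=
  ρ.withDensity fun x => ENNReal.ofReal (Real.exp (θ * x - logPartition ρ θ))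

/-! Write `b = logPartition ρ`, the cumulant generating function of `id` under `ρ`, so that `ν_t` is
`ρ` tilted by `t * x`. Then `KL(ν_θ, ν_t)` is the Bregman divergence
`b t - b θ - (t - θ) * b' θ`, and `b''(t)` is the variance of `ν_t`, which is positive since `ρ`
is not a point mass. Hence `b'` is strictly increasing, the constraint `b' θμ < b' θ'` reads
`θμ < θ'`, and on that half-line the divergence is increasing (convexity of `b` together with
`b' θ < b' θμ`) and continuous at `θμ`, so the infimum is its value at `θμ`. -/

open ProbabilityTheory Filter Set

namespace ProbabilityTheory

variable {Ω : Type*} {mΩ : MeasurableSpace Ω} {μ : Measure Ω} {X : Ω → ℝ} {s t : ℝ}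

lemma variance_tilted_mul_pos (hX : ∀ c, ¬ X =ᵐ[μ] fun _ ↦ c)
    (ht : t ∈ interior (integrableExpSet X μ)) : 0 < Var[X; μ.tilted (t * X ·)] := by
  have : NeZero μ := ⟨fun h ↦ hX 0 (by simp [h, EventuallyEq])⟩
  have : IsProbabilityMeasure (μ.tilted (t * X ·)) :=
    isProbabilityMeasure_tilted (interior_subset (s := integrableExpSet X μ) ht)
  refine (variance_nonneg _ _).lt_of_ne fun h ↦ hX (μ.tilted (t * X ·))[X] ?_
  exact (absolutelyContinuous_tilted (interior_subset (s := integrableExpSet X μ) ht)).ae_le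
    (ae_eq_integral_of_variance_eq_zero (memLp_tilted_mul ht 2) h.symm)

lemma strictMonoOn_deriv_cgf (hX : ∀ c, ¬ X =ᵐ[μ] fun _ ↦ c) :
    StrictMonoOn (deriv (cgf X μ)) (interior (integrableExpSet X μ)) := by
  refine strictMonoOn_of_deriv_pos convex_integrableExpSet.interior
    analyticOnNhd_cgf.deriv.continuousOn fun t ht ↦ ?_
  rw [interior_interior] at ht
  have h2 : deriv (deriv (cgf X μ)) t = iteratedDeriv 2 (cgf X μ) t := by
    rw [iteratedDeriv_succ, iteratedDeriv_one]
  rw [h2, ← variance_tilted_mul ht]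
  exact variance_tilted_mul_pos hX ht

lemma strictConvexOn_cgf (hX : ∀ c, ¬ X =ᵐ[μ] fun _ ↦ c) :
    StrictConvexOn ℝ (interior (integrableExpSet X μ)) (cgf X μ) :=
  (interior_interior (s := integrableExpSet X μ) ▸
    strictMonoOn_deriv_cgf hX).strictConvexOn_of_deriv convex_integrableExpSet.interior
    analyticOnNhd_cgf.continuousOn

lemma KLdiv_tilted_mul [NeZero μ] (hs : s ∈ interior (integrableExpSet X μ))
    (ht : t ∈ integrableExpSet X μ) :
    KLdiv (μ.tilted (s * X ·)) (μ.tilted (t * X ·))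
      = ENNReal.ofReal (cgf X μ t - cgf X μ s - (t - s) * deriv (cgf X μ) s) := by
  set ν := μ.tilted (s * X ·)
  have hs' : Integrable (fun ω ↦ exp (s * X ω)) μ :=
    interior_subset (s := integrableExpSet X μ) hs
  have : IsProbabilityMeasure ν := isProbabilityMeasure_tilted hs'
  have hXν : Integrable X ν := (memLp_tilted_mul hs 1).integrable le_rfl
  have hexp : Integrable (fun ω ↦ exp ((t - s) * X ω)) ν := by
    rw [integrable_tilted_iff hs']
    simp only [smul_eq_mul, ← exp_add, ← add_mul, add_sub_cancel]
    exact ht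
  have hν : μ.tilted (t * X ·) = ν.tilted ((t - s) * X ·) := by
    rw [tilted_tilted hs']
    congr with ω
    simp only [Pi.add_apply]
    ring
  have hmgf : ∫ ω, exp ((t - s) * X ω) ∂ν = exp (cgf X μ t - cgf X μ s) := by
    rw [integral_exp_tilted, exp_sub, exp_cgf ht, exp_cgf hs']
    simp only [Pi.add_apply, ← add_mul, add_sub_cancel, mgf]
  have hself : llr ν ν =ᵐ[ν] 0 := llr_self ν
  have hint : Integrable (llr ν ν) ν := (integrable_zero _ _ _).congr hself.symm
  rw [hν, KLdiv, if_pos ⟨absolutelyContinuous_tilted hexp,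
      integrable_llr_tilted_right .rfl (hXν.const_mul _) hint hexp⟩,
    integral_llr_tilted_right .rfl (hXν.const_mul _) hexp hint, integral_congr_ae hself,
    integral_const_mul, integral_tilted_mul_self hs, hmgf, log_exp]
  simp only [Pi.zero_apply, integral_zero]
  congr 1
  ring

end ProbabilityTheory

lemma ConvexOn.add_sub_mul_le_of_le_deriv {S : Set ℝ} {f : ℝ → ℝ} (hf : ConvexOn ℝ S f)
    {u v c : ℝ} (hu : u ∈ S) (hv : v ∈ S) (huv : u ≤ v) (hfu : DifferentiableAt ℝ f u)
    (hc : c ≤ deriv f u) : f u + (v - u) * c ≤ f v := by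
  rcases huv.eq_or_lt with rfl | huv
  · simp
  have hslope := hc.trans (hf.deriv_le_slope hu hv huv hfu)
  rw [slope_def_field, le_div_iff₀ (sub_pos.2 huv)] at hslope
  linarith

lemma biInf_le_of_tendsto {α β : Type*} [CompleteLattice β] [TopologicalSpace β]
    [ClosedIciTopology β] {f : α → β} {l : Filter α} [l.NeBot] {S : Set α} {y : β}
    (hS : S ∈ l) (hf : Tendsto f l (nhds y)) : ⨅ x ∈ S, f x ≤ y :=
  ge_of_tendsto hf (eventually_of_mem hS fun x hx ↦ iInf₂_le x hx)

lemma expFam_eq_tilted {ρ : Measure ℝ} [NeZero ρ] {θ : ℝ} (hθ : θ ∈ natParam ρ) :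
    expFam ρ θ = ρ.tilted (θ * id ·) := by
  rw [expFam, Measure.tilted]
  congr with x
  rw [exp_sub, logPartition, exp_log (integral_exp_pos hθ)]
  rfl

theorem Kinf_expFam_eq_d_general (ρ : Measure ℝ)
    (hnondeg : ¬ ∃ c : ℝ, ρ {c}ᶜ = 0)
    (hopen : IsOpen (natParam ρ))
    (θ θμ : ℝ) (hθ : θ ∈ natParam ρ) (hθμ : θμ ∈ natParam ρ)
    (hlt : deriv (logPartition ρ) θ < deriv (logPartition ρ) θμ) :
    (⨅ θ' ∈ {θ' ∈ natParam ρ |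
        deriv (logPartition ρ) θμ < deriv (logPartition ρ) θ'},
      KLdiv (expFam ρ θ) (expFam ρ θ'))
      = KLdiv (expFam ρ θ) (expFam ρ θμ) := by
  have hX : ∀ c, ¬ (id : ℝ → ℝ) =ᵐ[ρ] fun _ ↦ c := fun c h ↦ hnondeg ⟨c, ae_iff.1 h⟩
  have : NeZero ρ := ⟨fun h ↦ hX 0 (by simp [h, EventuallyEq])⟩
  have hΘ : interior (integrableExpSet id ρ) = natParam ρ := hopen.interior_eq
  have hb : logPartition ρ = cgf id ρ := rfl
  set b := logPartition ρ
  have hb_mono : StrictMonoOn (deriv b) (natParam ρ) := hb ▸ hΘ ▸ strictMonoOn_deriv_cgf hX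
  have hb_convex : ConvexOn ℝ (natParam ρ) b := hb ▸ hΘ ▸ (strictConvexOn_cgf hX).convexOn
  have hb_diff : DifferentiableAt ℝ b θμ := hb ▸ (analyticAt_cgf (hΘ ▸ hθμ)).differentiableAt
  have hKL : ∀ t ∈ natParam ρ, KLdiv (expFam ρ θ) (expFam ρ t)
      = ENNReal.ofReal (b t - b θ - (t - θ) * deriv b θ) := fun t ht ↦ by
    rw [expFam_eq_tilted hθ, expFam_eq_tilted ht]
    exact KLdiv_tilted_mul (hΘ ▸ hθ) ht
  have hset : {θ' ∈ natParam ρ | deriv b θμ < deriv b θ'} = natParam ρ ∩ Ioi θμ := by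
    ext t
    exact and_congr_right fun ht ↦ hb_mono.lt_iff_lt hθμ ht
  rw [hset, biInf_congr fun t ht ↦ hKL t ht.1, hKL θμ hθμ]
  refine le_antisymm (biInf_le_of_tendsto
    (inter_mem (mem_nhdsWithin_of_mem_nhds (hopen.mem_nhds hθμ)) self_mem_nhdsWithin)
    ((ENNReal.continuous_ofReal.tendsto _).comp ?_)) (le_iInf₂ fun t ⟨ht, hθμt⟩ ↦ ?_)
  · exact (((hb_diff.continuousAt.sub continuousAt_const).sub
      ((continuousAt_id.sub continuousAt_const).mul continuousAt_const)).mono_left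
      nhdsWithin_le_nhds)
  · have htangent := hb_convex.add_sub_mul_le_of_le_deriv hθμ ht hθμt.le hb_diff hlt.le
    exact ENNReal.ofReal_le_ofReal (by linarith)

/-- In a canonical regular exponential family, the optimal information quantity coincides
with the re-parameterized divergence `d`: for `θ ∈ Θ` and `μ ∈ I = b'(Θ)` with
`b'(θ) < μ`, say `μ = b'(θ_μ)` with `θ_μ ∈ Θ` (recall that `b'` is injective, being
strictly increasing), one has
`inf{ KL(ν_θ, ν_{θ'}) : θ' ∈ Θ, b'(θ') > μ } = d(b'(θ), μ) = KL(ν_θ, ν_{θ_μ})`. -/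
theorem Kinf_expFam_eq_d (ρ : Measure ℝ) [SigmaFinite ρ]
    (hnondeg : ¬ ∃ c : ℝ, ρ {c}ᶜ = 0)
    (hopen : IsOpen (natParam ρ)) (hne : (natParam ρ).Nonempty)
    (θ θμ : ℝ) (hθ : θ ∈ natParam ρ) (hθμ : θμ ∈ natParam ρ)
    (hlt : deriv (logPartition ρ) θ < deriv (logPartition ρ) θμ) :
    (⨅ θ' ∈ {θ' ∈ natParam ρ |
        deriv (logPartition ρ) θμ < deriv (logPartition ρ) θ'},
      KLdiv (expFam ρ θ) (expFam ρ θ'))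
      = KLdiv (expFam ρ θ) (expFam ρ θμ) :=
  Kinf_expFam_eq_d_general ρ hnondeg hopen θ θμ hθ hθμ hlt
end
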